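/- Let (𝒟₁, π₁) and (𝒟₂, π₂) be closed representations of a unital *-algebra A on complex Hilbert spaces H₁ and H₂, and let I : H₁ → H₂ be a linear isometry. Then I is an intertwiner from (𝒟₁, π₁) to (𝒟₂, π₂) if and only if I ∘ cl(π₁(a)) ⊆ cl(π₂(a)) ∘ I for every a ∈ A with a = a*, i.e. I maps dom(cl(π₁(a))) into dom(cl(π₂(a))) and I(cl(π₁(a))ξ) = cl(π₂(a))(Iξ) for all ξ ∈ dom(cl(π₁(a))). Moreover, if I is an intertwiner, then the inclusion I ∘ cl(π₁(a)) ⊆ cl(π₂(a)) ∘ I holds for every a ∈ A. -/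

import Mathlib

/-- A representation of a unital `⋆`-algebra `A` on a complex Hilbert space `H`:
a dense subspace `dom ⊆ H` together with a unital algebra homomorphism `π` from `A` into the
endomorphisms of `dom` satisfying `⟪π a ξ, η⟫ = ⟪ξ, π (star a) η⟫`. -/
structure HilbertRep (A : Type*) [Ring A] [Algebra ℂ A] [StarRing A] [StarModule ℂ A]
    (H : Type*) [NormedAddCommGroup H] [InnerProductSpace ℂ H] where
  dom : Submodule ℂ H
  dense : Dense (dom : Set H)
  π : A → (dom →ₗ[ℂ] dom)
  π_one : π 1 = LinearMap.id
  π_mul : ∀ a b : A, π (a * b) = (π a).comp (π b)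
  π_add : ∀ a b : A, π (a + b) = π a + π b
  π_smul : ∀ (c : ℂ) (a : A), π (c • a) = c • π a
  π_star : ∀ (a : A) (ξ η : dom),
    (inner ℂ ((π a ξ : dom) : H) (η : H) : ℂ) = inner ℂ (ξ : H) ((π (star a) η : dom) : H)

variable {A : Type*} [Ring A] [Algebra ℂ A] [StarRing A] [StarModule ℂ A]
variable {H₁ H₂ : Type*} [NormedAddCommGroup H₁] [InnerProductSpace ℂ H₁] [CompleteSpace H₁]
  [NormedAddCommGroup H₂] [InnerProductSpace ℂ H₂] [CompleteSpace H₂]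

/-- The operator `π a` of a representation, as a partially defined (unbounded) linear
operator on `H`. -/
def HilbertRep.op {A H : Type*} [Ring A] [Algebra ℂ A] [StarRing A] [StarModule ℂ A]
    [NormedAddCommGroup H] [InnerProductSpace ℂ H] (ρ : HilbertRep A H) (a : A) :
    H →ₗ.[ℂ] H :=
  ⟨ρ.dom, ρ.dom.subtype.comp (ρ.π a)⟩

/-- A representation is *closed* if its domain is the intersection of the domains of the
closures of all the operators `π a`. -/
def HilbertRep.IsClosedRep {A H : Type*} [Ring A] [Algebra ℂ A] [StarRing A] [StarModule ℂ A]
    [NormedAddCommGroup H] [InnerProductSpace ℂ H] (ρ : HilbertRep A H) : Prop :=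
  (ρ.dom : Set H) = ⋂ a : A, ((ρ.op a).closure.domain : Set H)

/-- `I` is an (isometric) intertwiner from `(𝒟₁, π₁)` to `(𝒟₂, π₂)`:
`I (𝒟₁) ⊆ 𝒟₂` and `I ∘ π₁ a = π₂ a ∘ I` on `𝒟₁` for every `a`. -/
def Intertwines (I : H₁ →ₗᵢ[ℂ] H₂) (ρ₁ : HilbertRep A H₁) (ρ₂ : HilbertRep A H₂) : Prop :=
  ∀ ξ : ρ₁.dom, ∃ η : ρ₂.dom, (η : H₂) = I (ξ : H₁) ∧
    ∀ a : A, ((ρ₂.π a η : ρ₂.dom) : H₂) = I ((ρ₁.π a ξ : ρ₁.dom) : H₁)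

/-- `I ∘ cl (π₁ a) ⊆ cl (π₂ a) ∘ I`:  `I` maps the domain of `cl (π₁ a)` into the domain of
`cl (π₂ a)` and intertwines the closures there. -/
def ClosureIntertwines (I : H₁ →ₗᵢ[ℂ] H₂) (ρ₁ : HilbertRep A H₁) (ρ₂ : HilbertRep A H₂)
    (a : A) : Prop :=
  ∀ ξ : (ρ₁.op a).closure.domain, ∃ η : (ρ₂.op a).closure.domain,
    (η : H₂) = I (ξ : H₁) ∧ (ρ₂.op a).closure η = I ((ρ₁.op a).closure ξ)

/-! For an intertwiner, `I × I` maps the graph of `π₁ a` into that of `π₂ a`, hence, `I` being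
continuous, the graph closure into the graph closure: this is `I ∘ cl π₁(a) ⊆ cl π₂(a) ∘ I`.

Conversely, let `ξ ∈ 𝒟₁`. Since `‖π(a)ζ‖² ≤ ⟪π(1 + a*a)ζ, ζ⟫`, the domain of `cl π(1 + a*a)` lies in
that of `cl π(a)`, so the inclusions for the symmetric elements `1 + a*a` put `Iξ` in every
`dom cl π₂(a)`, that is, in `𝒟₂` because `π₂` is closed. On `𝒟₂` the closures agree with `π₂`, so
`π₂(a) Iξ = I π₁(a) ξ` for symmetric `a`, and then for all `a = ℜ a + i ℑ a` by linearity in `a`. -/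

open Set Filter Topology
open scoped NNReal

namespace LinearPMap

theorem mapsTo_graph_iff {R E F G K : Type*} [CommRing R] [AddCommGroup E] [Module R E]
    [AddCommGroup F] [Module R F] [AddCommGroup G] [Module R G] [AddCommGroup K] [Module R K]
    {T : E →ₗ.[R] F} {S : G →ₗ.[R] K} {f : E → G} {g : F → K} :
    MapsTo (Prod.map f g) T.graph S.graph ↔
      ∀ x : T.domain, ∃ y : S.domain, (y : G) = f x ∧ S y = g (T x) := by
  refine ⟨fun h x => S.mem_graph_iff.1 (h (T.mem_graph x)), ?_⟩
  rintro h ⟨x, y⟩ hxy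
  obtain ⟨x, rfl, rfl⟩ := T.mem_graph_iff.1 hxy
  exact S.mem_graph_iff.2 (h x)

section Topological

variable {R E F G K : Type*} [CommRing R] [TopologicalSpace R]
  [AddCommGroup E] [Module R E] [TopologicalSpace E] [ContinuousAdd E] [ContinuousSMul R E]
  [AddCommGroup F] [Module R F] [TopologicalSpace F] [ContinuousAdd F] [ContinuousSMul R F]
  [AddCommGroup G] [Module R G] [TopologicalSpace G] [ContinuousAdd G] [ContinuousSMul R G]
  [AddCommGroup K] [Module R K] [TopologicalSpace K] [ContinuousAdd K] [ContinuousSMul R K]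

theorem IsClosable.mem_closure_graph {T : E →ₗ.[R] F} (hT : T.IsClosable) {p : E × F} :
    p ∈ _root_.closure (T.graph : Set (E × F)) ↔ p ∈ T.closure.graph := by
  rw [← hT.graph_closure_eq_closure_graph, ← Submodule.topologicalClosure_coe, SetLike.mem_coe]

theorem mapsTo_closure_graph {T : E →ₗ.[R] F} {S : G →ₗ.[R] K} {f : E → G} {g : F → K}
    (hT : T.IsClosable) (hS : S.IsClosable) (hf : Continuous f) (hg : Continuous g)
    (h : MapsTo (Prod.map f g) T.graph S.graph) :
    MapsTo (Prod.map f g) T.closure.graph S.closure.graph := fun _ hp =>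
  hS.mem_closure_graph.1 <| h.closure (hf.prodMap hg) (hT.mem_closure_graph.2 hp)

end Topological

section Normed

variable {𝕜 E F : Type*} [NormedField 𝕜] [NormedAddCommGroup E] [NormedSpace 𝕜 E]
  [NormedAddCommGroup F] [NormedSpace 𝕜 F] {T S : E →ₗ.[𝕜] F}

theorem cauchySeq_of_norm_le {hdom : T.domain ≤ S.domain} {C : ℝ≥0}
    (hbound : ∀ x : T.domain, ‖S (Submodule.inclusion hdom x)‖ ≤ C * (‖T x‖ + ‖(x : E)‖))
    {u : ℕ → T.domain} (hu : CauchySeq fun n => (u n : E)) (hTu : CauchySeq fun n => T (u n)) :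
    CauchySeq fun n => S (Submodule.inclusion hdom (u n)) := by
  obtain ⟨b, hb_nonneg, hb, hb_lim⟩ := cauchySeq_iff_le_tendsto_0.1 hu
  obtain ⟨c, hc_nonneg, hc, hc_lim⟩ := cauchySeq_iff_le_tendsto_0.1 hTu
  refine cauchySeq_iff_le_tendsto_0.2 ⟨fun N => C * (c N + b N),
    fun N => mul_nonneg C.2 (add_nonneg (hc_nonneg N) (hb_nonneg N)), fun m n N hm hn => ?_, ?_⟩
  · calc dist (S (Submodule.inclusion hdom (u m))) (S (Submodule.inclusion hdom (u n)))
        = ‖S (Submodule.inclusion hdom (u m - u n))‖ := by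
          rw [_root_.map_sub, S.map_sub, dist_eq_norm]
      _ ≤ C * (‖T (u m - u n)‖ + ‖((u m - u n : T.domain) : E)‖) := hbound _
      _ = C * (dist (T (u m)) (T (u n)) + dist (u m : E) (u n)) := by
          rw [T.map_sub, dist_eq_norm, dist_eq_norm, Submodule.coe_sub]
      _ ≤ C * (c N + b N) := by gcongr; exacts [hc m n N hm hn, hb m n N hm hn]
  · simpa using (hc_lim.add hb_lim).const_mul (C : ℝ)

theorem closure_domain_le_of_norm_le [CompleteSpace F] (hT : T.IsClosable) (hS : S.IsClosable)
    (hdom : T.domain ≤ S.domain) (C : ℝ≥0)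
    (hbound : ∀ x : T.domain, ‖S (Submodule.inclusion hdom x)‖ ≤ C * (‖T x‖ + ‖(x : E)‖)) :
    T.closure.domain ≤ S.closure.domain := by
  intro x hx
  obtain ⟨p, hp, hp_lim⟩ := mem_closure_iff_seq_limit.1 <|
    hT.mem_closure_graph.2 (T.closure.mem_graph ⟨x, hx⟩)
  choose u hu_fst hu_snd using fun n => T.mem_graph_iff.1 (hp n)
  have hu : Tendsto (fun n => (u n : E)) atTop (𝓝 x) := by
    simpa only [hu_fst] using hp_lim.fst_nhds
  have hTu : Tendsto (fun n => T (u n)) atTop (𝓝 (T.closure ⟨x, hx⟩)) := by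
    simpa only [hu_snd] using hp_lim.snd_nhds
  obtain ⟨z, hz⟩ := cauchySeq_tendsto_of_complete <|
    cauchySeq_of_norm_le hbound hu.cauchySeq hTu.cauchySeq
  have hxz : (x, z) ∈ _root_.closure (S.graph : Set (E × F)) :=
    mem_closure_of_tendsto (hu.prodMk_nhds hz)
      (.of_forall fun n => S.mem_graph (Submodule.inclusion hdom (u n)))
  exact mem_domain_of_mem_graph (hS.mem_closure_graph.1 hxz)

end Normed

theorem IsFormalAdjoint.isClosable {𝕜 E F : Type*} [RCLike 𝕜] [NormedAddCommGroup E]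
    [InnerProductSpace 𝕜 E] [NormedAddCommGroup F] [InnerProductSpace 𝕜 F] [CompleteSpace F]
    {T : E →ₗ.[𝕜] F} {S : F →ₗ.[𝕜] E} (h : T.IsFormalAdjoint S)
    (hS : Dense (S.domain : Set F)) : T.IsClosable :=
  (adjoint_isClosed hS).isClosable.leIsClosable (h.symm.le_adjoint hS)

end LinearPMap

theorem LinearMap.ext_of_isSelfAdjoint {A M : Type*} [AddCommGroup A] [Module ℂ A]
    [StarAddMonoid A] [StarModule ℂ A] [AddCommGroup M] [Module ℂ M] {f g : A →ₗ[ℂ] M}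
    (h : ∀ a, IsSelfAdjoint a → f a = g a) : f = g := by
  ext a
  rw [← realPart_add_I_smul_imaginaryPart a, map_add, map_add, map_smul, map_smul,
    h _ (realPart a).2, h _ (imaginaryPart a).2]

namespace HilbertRep

variable {H : Type*} [NormedAddCommGroup H] [InnerProductSpace ℂ H] (ρ : HilbertRep A H)

def orbitMap (ξ : ρ.dom) : A →ₗ[ℂ] H where
  toFun a := ρ.π a ξ
  map_add' a b := by rw [ρ.π_add]; rfl
  map_smul' c a := by rw [ρ.π_smul]; rfl

theorem op_isFormalAdjoint (a : A) : (ρ.op a).IsFormalAdjoint (ρ.op (star a)) :=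
  ρ.π_star a

theorem isClosable_op [CompleteSpace H] (a : A) : (ρ.op a).IsClosable :=
  (ρ.op_isFormalAdjoint a).isClosable ρ.dense

theorem inner_π_one_add_star_mul_self (a : A) (ξ : ρ.dom) :
    inner ℂ (ρ.π (1 + star a * a) ξ : H) (ξ : H) =
      ((‖(ξ : H)‖ ^ 2 + ‖(ρ.π a ξ : H)‖ ^ 2 : ℝ) : ℂ) := by
  rw [ρ.π_add, ρ.π_mul, ρ.π_one, LinearMap.add_apply, LinearMap.id_apply, LinearMap.comp_apply,
    Submodule.coe_add, inner_add_left, ρ.π_star, star_star, inner_self_eq_norm_sq_to_K,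
    inner_self_eq_norm_sq_to_K]
  push_cast
  rfl

theorem norm_π_le (a : A) (ξ : ρ.dom) :
    ‖(ρ.π a ξ : H)‖ ≤ ‖(ρ.π (1 + star a * a) ξ : H)‖ + ‖(ξ : H)‖ := by
  have h := norm_inner_le_norm (𝕜 := ℂ) (ρ.π (1 + star a * a) ξ : H) (ξ : H)
  rw [ρ.inner_π_one_add_star_mul_self, Complex.norm_real, Real.norm_of_nonneg (by positivity)] at h
  nlinarith [norm_nonneg (ρ.π a ξ : H), norm_nonneg (ρ.π (1 + star a * a) ξ : H),
    norm_nonneg (ξ : H)]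

theorem closure_op_domain_le [CompleteSpace H] (a : A) :
    (ρ.op (1 + star a * a)).closure.domain ≤ (ρ.op a).closure.domain :=
  LinearPMap.closure_domain_le_of_norm_le (ρ.isClosable_op _) (ρ.isClosable_op a) le_rfl 1
    fun ξ => by
      rw [NNReal.coe_one, one_mul]
      exact ρ.norm_π_le a ξ

variable {ρ}

theorem IsClosedRep.mem_dom [CompleteSpace H] (hρ : ρ.IsClosedRep) {x : H}
    (hx : ∀ a, IsSelfAdjoint a → x ∈ (ρ.op a).closure.domain) : x ∈ ρ.dom := by
  rw [← SetLike.mem_coe, hρ, mem_iInter]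
  exact fun a => ρ.closure_op_domain_le a <|
    hx _ ((IsSelfAdjoint.one A).add (IsSelfAdjoint.star_mul_self a))

end HilbertRep

section Intertwining

variable {E₁ E₂ : Type*} [NormedAddCommGroup E₁] [InnerProductSpace ℂ E₁]
  [NormedAddCommGroup E₂] [InnerProductSpace ℂ E₂]
  {ρ₁ : HilbertRep A E₁} {ρ₂ : HilbertRep A E₂} {I : E₁ →ₗᵢ[ℂ] E₂}

theorem closureIntertwines_iff_mapsTo {a : A} :
    ClosureIntertwines I ρ₁ ρ₂ a ↔
      MapsTo (Prod.map I I) (ρ₁.op a).closure.graph (ρ₂.op a).closure.graph :=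
  LinearPMap.mapsTo_graph_iff.symm

theorem Intertwines.mapsTo_graph (h : Intertwines I ρ₁ ρ₂) (a : A) :
    MapsTo (Prod.map I I) (ρ₁.op a).graph (ρ₂.op a).graph :=
  LinearPMap.mapsTo_graph_iff.2 fun ξ => (h ξ).imp fun _ hη => ⟨hη.1, hη.2 a⟩

theorem Intertwines.closureIntertwines [CompleteSpace E₁] [CompleteSpace E₂]
    (h : Intertwines I ρ₁ ρ₂) (a : A) :
    ClosureIntertwines I ρ₁ ρ₂ a :=
  closureIntertwines_iff_mapsTo.2 <| LinearPMap.mapsTo_closure_graph (ρ₁.isClosable_op a)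
    (ρ₂.isClosable_op a) I.continuous I.continuous (h.mapsTo_graph a)

theorem Intertwines.of_closureIntertwines_of_isSelfAdjoint [CompleteSpace E₂]
    (h₂ : ρ₂.IsClosedRep) (h : ∀ a, IsSelfAdjoint a → ClosureIntertwines I ρ₁ ρ₂ a) :
    Intertwines I ρ₁ ρ₂ := by
  intro ξ
  have hgraph : ∀ a, IsSelfAdjoint a → (I ξ, I (ρ₁.π a ξ)) ∈ (ρ₂.op a).closure.graph :=
    fun a ha => closureIntertwines_iff_mapsTo.1 (h a ha) <|
      LinearPMap.le_graph_of_le (ρ₁.op a).le_closure ((ρ₁.op a).mem_graph ξ)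
  have hdom : I ξ ∈ ρ₂.dom :=
    h₂.mem_dom fun a ha => LinearPMap.mem_domain_of_mem_graph (hgraph a ha)
  refine ⟨⟨I ξ, hdom⟩, rfl, fun a => ?_⟩
  suffices ρ₂.orbitMap ⟨I ξ, hdom⟩ = I.toLinearMap ∘ₗ ρ₁.orbitMap ξ from
    LinearMap.congr_fun this a
  refine LinearMap.ext_of_isSelfAdjoint fun a ha => ?_
  exact (ρ₂.op a).closure.mem_graph_snd_inj
    (LinearPMap.le_graph_of_le (ρ₂.op a).le_closure ((ρ₂.op a).mem_graph ⟨I ξ, hdom⟩))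
    (hgraph a ha) rfl

end Intertwining

theorem intertwiner_iff_closures_on_symmetric_general
    (ρ₁ : HilbertRep A H₁) (ρ₂ : HilbertRep A H₂)
    (h₂ : ρ₂.IsClosedRep) (I : H₁ →ₗᵢ[ℂ] H₂) :
    (Intertwines I ρ₁ ρ₂ ↔ ∀ a : A, star a = a → ClosureIntertwines I ρ₁ ρ₂ a) ∧
    (Intertwines I ρ₁ ρ₂ → ∀ a : A, ClosureIntertwines I ρ₁ ρ₂ a) :=
  ⟨⟨fun h a _ => h.closureIntertwines a, .of_closureIntertwines_of_isSelfAdjoint h₂⟩,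
    Intertwines.closureIntertwines⟩

/-- A linear isometry intertwines two closed representations if and only if it intertwines the
closures `cl (π a)` for all symmetric elements `a = a*`; moreover an intertwiner automatically
intertwines the closures `cl (π a)` for *all* `a`. -/
theorem intertwiner_iff_closures_on_symmetric
    (ρ₁ : HilbertRep A H₁) (ρ₂ : HilbertRep A H₂)
    (h₁ : ρ₁.IsClosedRep) (h₂ : ρ₂.IsClosedRep) (I : H₁ →ₗᵢ[ℂ] H₂) :
    (Intertwines I ρ₁ ρ₂ ↔ ∀ a : A, star a = a → ClosureIntertwines I ρ₁ ρ₂ a) ∧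
    (Intertwines I ρ₁ ρ₂ → ∀ a : A, ClosureIntertwines I ρ₁ ρ₂ a) :=
  intertwiner_iff_closures_on_symmetric_general ρ₁ ρ₂ h₂ I
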